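/- For the Gal'tsov–Kechkin (EMDA dyonic Kerr–NUT) metric, set β(r,θ) = Σ = r(r − r₋) + (a cos θ + N)² − N₋² and λ(r,θ) = Σ/Δ, and let 𝒢(r,θ) = [[g_tt, g_tφ],[g_tφ, g_φφ]] be the Gram matrix of ∂_t, ∂_φ (invertible on U since det 𝒢 = −Δ sin²θ ≠ 0). Then on the open subset of U where additionally 2r − r₋ ≠ 0: (a) the compatibility condition ∂_θ(λ · ∂_r ln β) = 0 holds — indeed λ · ∂_r ln β = (2r − r₋)/Δ; (b) the integrability condition ∂_θ( (𝒢⁻¹)^{ab} + (∂_r ln β)⁻¹ · ∂_r(𝒢⁻¹)^{ab} ) = 0 holds for all a, b ∈ {t, φ}. -/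

import Mathlib

open Real

noncomputable section

namespace GK

variable (M N a Q P : ℝ)

def rm : ℝ := M * (Q^2 + P^2) / (M^2 + N^2)
def Nm : ℝ := N * (Q^2 + P^2) / (2 * (M^2 + N^2))
def Δ (r : ℝ) : ℝ :=
  (r - rm M N Q P) * (r - 2*M) + a^2 - (N - Nm M N Q P)^2
def Sig (r θ : ℝ) : ℝ :=
  r * (r - rm M N Q P) + (a * Real.cos θ + N)^2 - (Nm M N Q P)^2
def w (r θ : ℝ) : ℝ :=
  N * Δ M N a Q P r * Real.cos θ
    + a * (Real.sin θ)^2 * (M * (r - rm M N Q P) + N * (N - Nm M N Q P))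
def ω (r θ : ℝ) : ℝ :=
  -(2 * w M N a Q P r θ) / (Δ M N a Q P r - a^2 * (Real.sin θ)^2)
def f (r θ : ℝ) : ℝ :=
  (Δ M N a Q P r - a^2 * (Real.sin θ)^2) / Sig M N a Q P r θ

def g_tt (r θ : ℝ) : ℝ := -(f M N a Q P r θ)
def g_tφ (r θ : ℝ) : ℝ := f M N a Q P r θ * ω M N a Q P r θ
def g_φφ (r θ : ℝ) : ℝ :=
  Sig M N a Q P r θ * Δ M N a Q P r * (Real.sin θ)^2
      / (Δ M N a Q P r - a^2 * (Real.sin θ)^2)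
    - f M N a Q P r θ * (ω M N a Q P r θ)^2

/-- The Gram matrix `𝒢 = [[g_tt, g_tφ],[g_tφ, g_φφ]]` of the Killing vectors
`∂_t, ∂_φ` of the Gal'tsov–Kechkin metric. -/
def Gram (r θ : ℝ) : Matrix (Fin 2) (Fin 2) ℝ :=
  Matrix.of
    ![![g_tt M N a Q P r θ, g_tφ M N a Q P r θ],
      ![g_tφ M N a Q P r θ, g_φφ M N a Q P r θ]]

/-- `β = Σ`, the `θθ`-coefficient of the metric. -/
def β (r θ : ℝ) : ℝ := Sig M N a Q P r θ

/-- `λ = Σ/Δ`, the `rr`-coefficient of the metric. -/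
def lam (r θ : ℝ) : ℝ := Sig M N a Q P r θ / Δ M N a Q P r

end GK


namespace GKAux

open GK

variable (M N a Q P : ℝ)

/-! ### Explicit inverse-Gram entries in split form -/

/-- `A`-part (r-dependent) of the `tt` entry of the inverse Gram matrix. -/
def Att (r : ℝ) : ℝ :=
  -(r * (r - rm M N Q P) + N^2 - (Nm M N Q P)^2)^2
    - a^2 * ((r + 2*M) * (r - rm M N Q P)
        + (3*N^2 - 2*N*(Nm M N Q P) - (Nm M N Q P)^2))

def Atp (r : ℝ) : ℝ :=
  -(2*a*(M*(r - rm M N Q P) + N*(N - Nm M N Q P)))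

def App (_r : ℝ) : ℝ := -(a^2)

def Btt (θ : ℝ) : ℝ :=
  -(4*N*a*Real.cos θ) + (4*N^2 - a^2)*(Real.cos θ)^2
    + 4*N*a*(Real.cos θ)^3 + a^2*(Real.cos θ)^4

def Btp (θ : ℝ) : ℝ := -(2*N*Real.cos θ)

def Bpp (_θ : ℝ) : ℝ := 1

/-- Generic entry shape of the inverse Gram matrix. -/
def ent (A B : ℝ → ℝ) (r θ : ℝ) : ℝ :=
  (A r * Real.sin θ ^ 2 + B θ * Δ M N a Q P r)
    / (Sig M N a Q P r θ * Δ M N a Q P r * Real.sin θ ^ 2)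

/-- Explicit candidate for the inverse Gram matrix. -/
def Minv (r θ : ℝ) : Matrix (Fin 2) (Fin 2) ℝ :=
  Matrix.of
    ![![ent M N a Q P (Att M N a Q P) (Btt N a) r θ,
        ent M N a Q P (Atp M N a Q P) (Btp N) r θ],
      ![ent M N a Q P (Atp M N a Q P) (Btp N) r θ,
        ent M N a Q P (App a) Bpp r θ]]

/-- Key polynomial identity (uses `sin² + cos² = 1`). -/
lemma hkey (r θ : ℝ) :
    (Att M N a Q P r * Real.sin θ ^ 2 + Btt N a θ * Δ M N a Q P r)
        * (Δ M N a Q P r - a^2 * (Real.sin θ)^2)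
      = 4 * (w M N a Q P r θ)^2 - (Sig M N a Q P r θ)^2 * Δ M N a Q P r * Real.sin θ ^ 2 := by
  have hsc : Real.sin θ ^ 2 = 1 - Real.cos θ ^ 2 := Real.sin_sq θ
  simp only [Att, Btt, w, Sig, Δ]
  rw [hsc]
  ring

lemma hone (r θ : ℝ) :
    Atp M N a Q P r * Real.sin θ ^ 2 + Btp N θ * Δ M N a Q P r
      = -(2 * w M N a Q P r θ) := by
  simp only [Atp, Btp, w, Δ]
  ring

lemma htwo (r θ : ℝ) :
    App a r * Real.sin θ ^ 2 + Bpp θ * Δ M N a Q P r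
      = Δ M N a Q P r - a^2 * (Real.sin θ)^2 := by
  simp only [App, Bpp]
  ring

lemma assemble1 (D S w Δ' s2 n0 n1 : ℝ) (hS : S ≠ 0) (hD : D ≠ 0)
    (hΔ : Δ' ≠ 0) (hs2 : s2 ≠ 0)
    (h0 : n0 * D = 4*w^2 - S^2*Δ'*s2) (h1 : n1 = -(2*w)) :
    -(D/S) * (n0/(S*Δ'*s2)) + (D/S * (-(2*w)/D)) * (n1/(S*Δ'*s2)) = 1 := by
  subst h1
  field_simp
  linear_combination (-1 : ℝ) * h0

lemma assemble0 (D S w Δ' s2 n1 n2 : ℝ) (hS : S ≠ 0) (hD : D ≠ 0)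
    (hΔ : Δ' ≠ 0) (hs2 : s2 ≠ 0)
    (h1 : n1 = -(2*w)) (h2 : n2 = D) :
    -(D/S) * (n1/(S*Δ'*s2)) + (D/S * (-(2*w)/D)) * (n2/(S*Δ'*s2)) = 0 := by
  subst h1; subst h2
  field_simp
  ring

lemma assemble2 (D S w Δ' s2 n0 n1 : ℝ) (hS : S ≠ 0) (hD : D ≠ 0)
    (hΔ : Δ' ≠ 0) (hs2 : s2 ≠ 0)
    (h0 : n0 * D = 4*w^2 - S^2*Δ'*s2) (h1 : n1 = -(2*w)) :
    (D/S * (-(2*w)/D)) * (n0/(S*Δ'*s2))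
      + (S*Δ'*s2/D - D/S * (-(2*w)/D)^2) * (n1/(S*Δ'*s2)) = 0 := by
  subst h1
  field_simp
  linear_combination (-(2*w)) * h0

lemma assemble3 (D S w Δ' s2 n1 n2 : ℝ) (hS : S ≠ 0) (hD : D ≠ 0)
    (hΔ : Δ' ≠ 0) (hs2 : s2 ≠ 0)
    (h1 : n1 = -(2*w)) (h2 : n2 = D) :
    (D/S * (-(2*w)/D)) * (n1/(S*Δ'*s2))
      + (S*Δ'*s2/D - D/S * (-(2*w)/D)^2) * (n2/(S*Δ'*s2)) = 1 := by
  subst h1; subst h2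
  field_simp
  ring

lemma gram_mul_minv (r θ : ℝ)
    (hΔ : Δ M N a Q P r ≠ 0) (hSig : Sig M N a Q P r θ ≠ 0)
    (hs : Real.sin θ ≠ 0)
    (hD : Δ M N a Q P r - a^2 * (Real.sin θ)^2 ≠ 0) :
    Gram M N a Q P r θ * Minv M N a Q P r θ = 1 := by
  have hs2 : Real.sin θ ^ 2 ≠ 0 := pow_ne_zero 2 hs
  ext i j
  fin_cases i <;> fin_cases j <;>
    simp only [Gram, Minv, Matrix.mul_apply, Fin.sum_univ_two, Matrix.of_apply,
      Matrix.cons_val', Matrix.cons_val_zero, Matrix.cons_val_one, Matrix.head_cons,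
      Matrix.head_fin_const, Matrix.empty_val', Matrix.cons_val_fin_one,
      Matrix.one_apply, g_tt, g_tφ, g_φφ, f, ω, ent,
      if_true, if_false, Fin.mk_one, Fin.zero_eta, ne_eq, one_ne_zero, zero_ne_one,
      not_false_eq_true, if_neg, Fin.isValue, reduceCtorEq]
  · exact assemble1 _ _ _ _ _ _ _ hSig hD hΔ hs2
      (hkey M N a Q P r θ) (hone M N a Q P r θ)
  · exact assemble0 _ _ _ _ _ _ _ hSig hD hΔ hs2
      (hone M N a Q P r θ) (htwo M N a Q P r θ)
  · exact assemble2 _ _ _ _ _ _ _ hSig hD hΔ hs2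
      (hkey M N a Q P r θ) (hone M N a Q P r θ)
  · exact assemble3 _ _ _ _ _ _ _ hSig hD hΔ hs2
      (hone M N a Q P r θ) (htwo M N a Q P r θ)

lemma gram_inv (r θ : ℝ)
    (hΔ : Δ M N a Q P r ≠ 0) (hSig : Sig M N a Q P r θ ≠ 0)
    (hs : Real.sin θ ≠ 0)
    (hD : Δ M N a Q P r - a^2 * (Real.sin θ)^2 ≠ 0) :
    (Gram M N a Q P r θ)⁻¹ = Minv M N a Q P r θ :=
  Matrix.inv_eq_right_inv (gram_mul_minv M N a Q P r θ hΔ hSig hs hD)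

/-! ### Derivatives -/

lemma hasDerivAt_Sig (r θ : ℝ) :
    HasDerivAt (fun r' => Sig M N a Q P r' θ) (2*r - rm M N Q P) r := by
  simp only [Sig]
  have h := (((hasDerivAt_id' r).mul ((hasDerivAt_id' r).sub_const
      (rm M N Q P))).add_const ((a * Real.cos θ + N)^2)).sub_const ((Nm M N Q P)^2)
  exact h.congr_deriv (by ring)

lemma hasDerivAt_Delta (r : ℝ) :
    HasDerivAt (fun r' => Δ M N a Q P r') (2*r - rm M N Q P - 2*M) r := by
  simp only [Δ]
  have h := ((((hasDerivAt_id' r).sub_const (rm M N Q P)).mul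
      ((hasDerivAt_id' r).sub_const (2*M))).add_const (a^2)).sub_const
      ((N - Nm M N Q P)^2)
  exact h.congr_deriv (by ring)

lemma hasDerivAt_Att (r : ℝ) :
    HasDerivAt (fun r' => Att M N a Q P r')
      (-(2 * (r * (r - rm M N Q P) + N^2 - (Nm M N Q P)^2) * (2*r - rm M N Q P))
        - a^2 * (2*r + 2*M - rm M N Q P)) r := by
  simp only [Att]
  have h1 : HasDerivAt
      (fun r' : ℝ => r' * (r' - rm M N Q P) + N^2 - (Nm M N Q P)^2)
      (1 * (r - rm M N Q P) + r * 1) r :=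
    (((hasDerivAt_id' r).mul ((hasDerivAt_id' r).sub_const
      (rm M N Q P))).add_const (N^2)).sub_const ((Nm M N Q P)^2)
  have h2 : HasDerivAt
      (fun r' : ℝ => (r' + 2*M) * (r' - rm M N Q P)
        + (3*N^2 - 2*N*(Nm M N Q P) - (Nm M N Q P)^2))
      (1 * (r - rm M N Q P) + (r + 2*M) * 1) r :=
    ((((hasDerivAt_id' r).add_const (2*M)).mul ((hasDerivAt_id' r).sub_const
      (rm M N Q P)))).add_const _
  have h := ((h1.pow 2).neg).sub (h2.const_mul (a^2))
  exact h.congr_deriv (by ring)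

lemma hasDerivAt_Atp (r : ℝ) :
    HasDerivAt (fun r' => Atp M N a Q P r') (-(2*a*M)) r := by
  simp only [Atp]
  have h := ((((hasDerivAt_id' r).sub_const (rm M N Q P)).const_mul M).add_const
      (N*(N - Nm M N Q P))).const_mul (2*a) |>.neg
  exact h.congr_deriv (by ring)

lemma hasDerivAt_App (r : ℝ) :
    HasDerivAt (fun r' => App a r') 0 r := hasDerivAt_const r _

lemma hasDerivAt_ent (A B : ℝ → ℝ) (a' : ℝ) (r θ : ℝ)
    (hA : HasDerivAt A a' r)
    (hΔ : Δ M N a Q P r ≠ 0) (hSig : Sig M N a Q P r θ ≠ 0)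
    (hs : Real.sin θ ≠ 0) :
    HasDerivAt (fun r' => ent M N a Q P A B r' θ)
      (((a' * Real.sin θ ^ 2 + B θ * (2*r - rm M N Q P - 2*M))
          * (Sig M N a Q P r θ * Δ M N a Q P r * Real.sin θ ^ 2)
        - (A r * Real.sin θ ^ 2 + B θ * Δ M N a Q P r)
          * (((2*r - rm M N Q P) * Δ M N a Q P r
              + Sig M N a Q P r θ * (2*r - rm M N Q P - 2*M)) * Real.sin θ ^ 2))
        / (Sig M N a Q P r θ * Δ M N a Q P r * Real.sin θ ^ 2)^2) r := by
  have hs2 : Real.sin θ ^ 2 ≠ 0 := pow_ne_zero 2 hs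
  have hNum : HasDerivAt
      (fun r' => A r' * Real.sin θ ^ 2 + B θ * Δ M N a Q P r')
      (a' * Real.sin θ ^ 2 + B θ * (2*r - rm M N Q P - 2*M)) r :=
    (hA.mul_const _).add ((hasDerivAt_Delta M N a Q P r).const_mul (B θ))
  have hDen : HasDerivAt
      (fun r' => Sig M N a Q P r' θ * Δ M N a Q P r' * Real.sin θ ^ 2)
      (((2*r - rm M N Q P) * Δ M N a Q P r
        + Sig M N a Q P r θ * (2*r - rm M N Q P - 2*M)) * Real.sin θ ^ 2) r :=
    ((hasDerivAt_Sig M N a Q P r θ).mul (hasDerivAt_Delta M N a Q P r)).mul_const _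
  exact hNum.div hDen (mul_ne_zero (mul_ne_zero hSig hΔ) hs2)

/-- The θ-independent combination: `ent + (∂_r ln β)⁻¹ ∂_r ent` depends only on `r`. -/
lemma key (A B : ℝ → ℝ) (a' : ℝ) (r θ : ℝ)
    (hA : HasDerivAt A a' r)
    (hΔ : Δ M N a Q P r ≠ 0) (hSig : Sig M N a Q P r θ ≠ 0)
    (hs : Real.sin θ ≠ 0) (h2r : 2*r - rm M N Q P ≠ 0) :
    ent M N a Q P A B r θ
      + ((2*r - rm M N Q P) / Sig M N a Q P r θ)⁻¹
        * deriv (fun r' => ent M N a Q P A B r' θ) r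
    = (a' * Δ M N a Q P r - A r * (2*r - rm M N Q P - 2*M))
        / ((Δ M N a Q P r)^2 * (2*r - rm M N Q P)) := by
  have hs2 : Real.sin θ ^ 2 ≠ 0 := pow_ne_zero 2 hs
  rw [(hasDerivAt_ent M N a Q P A B a' r θ hA hΔ hSig hs).deriv]
  simp only [ent]
  field_simp
  ring

/-! ### Eventual nonvanishing -/

lemma cont_Sig_theta (r : ℝ) : Continuous (fun θ' => Sig M N a Q P r θ') := by
  simp only [Sig]; fun_prop

lemma cont_Sig_r (θ : ℝ) : Continuous (fun r' => Sig M N a Q P r' θ) := by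
  simp only [Sig]; fun_prop

lemma cont_Delta : Continuous (fun r' => Δ M N a Q P r') := by
  simp only [Δ]; fun_prop

lemma cont_D_theta (r : ℝ) :
    Continuous (fun θ' => Δ M N a Q P r - a^2 * (Real.sin θ')^2) := by
  fun_prop

lemma cont_D_r (θ : ℝ) :
    Continuous (fun r' => Δ M N a Q P r' - a^2 * (Real.sin θ)^2) := by
  simp only [Δ]; fun_prop

/-! ### Master lemma for part (b) -/

lemma master (A B : ℝ → ℝ) (a' : ℝ → ℝ) (i j : Fin 2)
    (hA : ∀ x, HasDerivAt A (a' x) x)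
    (hent : ∀ r θ : ℝ, Δ M N a Q P r ≠ 0 → Sig M N a Q P r θ ≠ 0 →
      Real.sin θ ≠ 0 → Δ M N a Q P r - a^2 * (Real.sin θ)^2 ≠ 0 →
      (Gram M N a Q P r θ)⁻¹ i j = ent M N a Q P A B r θ)
    (r θ : ℝ)
    (hΔ : Δ M N a Q P r ≠ 0) (hSig : Sig M N a Q P r θ ≠ 0)
    (hs : Real.sin θ ≠ 0)
    (hD : Δ M N a Q P r - a^2 * (Real.sin θ)^2 ≠ 0)
    (h2r : 2*r - rm M N Q P ≠ 0) :
    deriv (fun θ' =>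
      (Gram M N a Q P r θ')⁻¹ i j
        + (deriv (fun r' => Real.log (GK.β M N a Q P r' θ')) r)⁻¹
          * deriv (fun r' => (Gram M N a Q P r' θ')⁻¹ i j) r) θ = 0 := by
  have hK : ∀ θ' : ℝ, Sig M N a Q P r θ' ≠ 0 → Real.sin θ' ≠ 0 →
      Δ M N a Q P r - a^2 * (Real.sin θ')^2 ≠ 0 →
      (Gram M N a Q P r θ')⁻¹ i j
        + (deriv (fun r' => Real.log (GK.β M N a Q P r' θ')) r)⁻¹
          * deriv (fun r' => (Gram M N a Q P r' θ')⁻¹ i j) r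
      = (a' r * Δ M N a Q P r - A r * (2*r - rm M N Q P - 2*M))
          / ((Δ M N a Q P r)^2 * (2*r - rm M N Q P)) := by
    intro θ' h1 h2 h3
    have e1 : (Gram M N a Q P r θ')⁻¹ i j = ent M N a Q P A B r θ' :=
      hent r θ' hΔ h1 h2 h3
    have e2 : deriv (fun r' => Real.log (GK.β M N a Q P r' θ')) r
        = (2*r - rm M N Q P) / Sig M N a Q P r θ' := by
      simp only [GK.β]
      exact ((hasDerivAt_Sig M N a Q P r θ').log h1).deriv
    have e3 : deriv (fun r' => (Gram M N a Q P r' θ')⁻¹ i j) r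
        = deriv (fun r' => ent M N a Q P A B r' θ') r := by
      apply Filter.EventuallyEq.deriv_eq
      have hΔe : ∀ᶠ r' in nhds r, Δ M N a Q P r' ≠ 0 :=
        ((cont_Delta M N a Q P).tendsto r).eventually_ne hΔ
      have hSige : ∀ᶠ r' in nhds r, Sig M N a Q P r' θ' ≠ 0 :=
        ((cont_Sig_r M N a Q P θ').tendsto r).eventually_ne h1
      have hDe : ∀ᶠ r' in nhds r,
          Δ M N a Q P r' - a^2 * (Real.sin θ')^2 ≠ 0 :=
        ((cont_D_r M N a Q P θ').tendsto r).eventually_ne h3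
      filter_upwards [hΔe, hSige, hDe] with r' h1' h2' h3'
      exact hent r' θ' h1' h2' h2 h3'
    rw [e1, e2, e3]
    exact key M N a Q P A B (a' r) r θ' (hA r) hΔ h1 h2 h2r
  have hev : (fun θ' =>
      (Gram M N a Q P r θ')⁻¹ i j
        + (deriv (fun r' => Real.log (GK.β M N a Q P r' θ')) r)⁻¹
          * deriv (fun r' => (Gram M N a Q P r' θ')⁻¹ i j) r)
      =ᶠ[nhds θ] (fun _ =>
        (a' r * Δ M N a Q P r - A r * (2*r - rm M N Q P - 2*M))
          / ((Δ M N a Q P r)^2 * (2*r - rm M N Q P))) := by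
    have hSige : ∀ᶠ θ' in nhds θ, Sig M N a Q P r θ' ≠ 0 :=
      ((cont_Sig_theta M N a Q P r).tendsto θ).eventually_ne hSig
    have hse : ∀ᶠ θ' in nhds θ, Real.sin θ' ≠ 0 :=
      (Real.continuous_sin.tendsto θ).eventually_ne hs
    have hDe : ∀ᶠ θ' in nhds θ,
        Δ M N a Q P r - a^2 * (Real.sin θ')^2 ≠ 0 :=
      ((cont_D_theta M N a Q P r).tendsto θ).eventually_ne hD
    filter_upwards [hSige, hse, hDe] with θ' h1 h2 h3
    exact hK θ' h1 h2 h3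
  rw [hev.deriv_eq, deriv_const]

/-! ### Entry identification -/

lemma entry00 (r θ : ℝ) (hΔ : Δ M N a Q P r ≠ 0) (hSig : Sig M N a Q P r θ ≠ 0)
    (hs : Real.sin θ ≠ 0) (hD : Δ M N a Q P r - a^2 * (Real.sin θ)^2 ≠ 0) :
    (Gram M N a Q P r θ)⁻¹ (0 : Fin 2) (0 : Fin 2)
      = ent M N a Q P (Att M N a Q P) (Btt N a) r θ := by
  rw [gram_inv M N a Q P r θ hΔ hSig hs hD]; simp [Minv]

lemma entry01 (r θ : ℝ) (hΔ : Δ M N a Q P r ≠ 0) (hSig : Sig M N a Q P r θ ≠ 0)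
    (hs : Real.sin θ ≠ 0) (hD : Δ M N a Q P r - a^2 * (Real.sin θ)^2 ≠ 0) :
    (Gram M N a Q P r θ)⁻¹ (0 : Fin 2) (1 : Fin 2)
      = ent M N a Q P (Atp M N a Q P) (Btp N) r θ := by
  rw [gram_inv M N a Q P r θ hΔ hSig hs hD]; simp [Minv]

lemma entry10 (r θ : ℝ) (hΔ : Δ M N a Q P r ≠ 0) (hSig : Sig M N a Q P r θ ≠ 0)
    (hs : Real.sin θ ≠ 0) (hD : Δ M N a Q P r - a^2 * (Real.sin θ)^2 ≠ 0) :
    (Gram M N a Q P r θ)⁻¹ (1 : Fin 2) (0 : Fin 2)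
      = ent M N a Q P (Atp M N a Q P) (Btp N) r θ := by
  rw [gram_inv M N a Q P r θ hΔ hSig hs hD]; simp [Minv]

lemma entry11 (r θ : ℝ) (hΔ : Δ M N a Q P r ≠ 0) (hSig : Sig M N a Q P r θ ≠ 0)
    (hs : Real.sin θ ≠ 0) (hD : Δ M N a Q P r - a^2 * (Real.sin θ)^2 ≠ 0) :
    (Gram M N a Q P r θ)⁻¹ (1 : Fin 2) (1 : Fin 2)
      = ent M N a Q P (App a) Bpp r θ := by
  rw [gram_inv M N a Q P r θ hΔ hSig hs hD]; simp [Minv]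

end GKAux

/-- For the Gal'tsov–Kechkin metric with `β = Σ`, `λ = Σ/Δ`,
on the open subset of `U` where `2r − r₋ ≠ 0`:
(a) the compatibility condition `∂_θ(λ·∂_r ln β) = 0` holds, and indeed
`λ·∂_r ln β = (2r − r₋)/Δ`;
(b) the integrability condition
`∂_θ((𝒢⁻¹)^{ab} + (∂_r ln β)⁻¹·∂_r(𝒢⁻¹)^{ab}) = 0` holds for all `a,b ∈ {t,φ}`. -/
theorem galtsov_kechkin_compatibility_and_integrability
    (M N a Q P : ℝ) (hMN : M^2 + N^2 ≠ 0) :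
    ∀ r θ : ℝ,
      GK.Δ M N a Q P r ≠ 0 →
      GK.Sig M N a Q P r θ ≠ 0 →
      Real.sin θ ≠ 0 →
      GK.Δ M N a Q P r - a^2 * (Real.sin θ)^2 ≠ 0 →
      2*r - GK.rm M N Q P ≠ 0 →
      -- (a) compatibility
      (GK.lam M N a Q P r θ
            * deriv (fun r' => Real.log (GK.β M N a Q P r' θ)) r
          = (2*r - GK.rm M N Q P) / GK.Δ M N a Q P r
        ∧ deriv (fun θ' =>
            GK.lam M N a Q P r θ'
              * deriv (fun r' => Real.log (GK.β M N a Q P r' θ')) r) θ = 0)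
      -- (b) integrability
      ∧ (∀ i j : Fin 2,
          deriv (fun θ' =>
            (GK.Gram M N a Q P r θ')⁻¹ i j
              + (deriv (fun r' => Real.log (GK.β M N a Q P r' θ')) r)⁻¹
                * deriv (fun r' => (GK.Gram M N a Q P r' θ')⁻¹ i j) r) θ
            = 0) := by
  intro r θ hΔ hSig hs hD h2r
  have e2 : ∀ θ' : ℝ, GK.Sig M N a Q P r θ' ≠ 0 →
      deriv (fun r' => Real.log (GK.β M N a Q P r' θ')) r
        = (2*r - GK.rm M N Q P) / GK.Sig M N a Q P r θ' := by
    intro θ' h1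
    simp only [GK.β]
    exact ((GKAux.hasDerivAt_Sig M N a Q P r θ').log h1).deriv
  constructor
  · constructor
    · rw [e2 θ hSig]
      simp only [GK.lam]
      field_simp
    · have hev : (fun θ' => GK.lam M N a Q P r θ'
          * deriv (fun r' => Real.log (GK.β M N a Q P r' θ')) r)
          =ᶠ[nhds θ] (fun _ => (2*r - GK.rm M N Q P) / GK.Δ M N a Q P r) := by
        have hSige : ∀ᶠ θ' in nhds θ, GK.Sig M N a Q P r θ' ≠ 0 :=
          ((GKAux.cont_Sig_theta M N a Q P r).tendsto θ).eventually_ne hSig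
        filter_upwards [hSige] with θ' h1
        rw [e2 θ' h1]
        simp only [GK.lam]
        field_simp
      rw [hev.deriv_eq, deriv_const]
  · intro i j
    fin_cases i <;> fin_cases j
    · exact GKAux.master M N a Q P (GKAux.Att M N a Q P) (GKAux.Btt N a)
        (fun x => -(2 * (x * (x - GK.rm M N Q P) + N^2 - (GK.Nm M N Q P)^2)
            * (2*x - GK.rm M N Q P)) - a^2 * (2*x + 2*M - GK.rm M N Q P))
        0 0 (GKAux.hasDerivAt_Att M N a Q P)
        (GKAux.entry00 M N a Q P) r θ hΔ hSig hs hD h2r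
    · exact GKAux.master M N a Q P (GKAux.Atp M N a Q P) (GKAux.Btp N)
        (fun _ => -(2*a*M)) 0 1 (GKAux.hasDerivAt_Atp M N a Q P)
        (GKAux.entry01 M N a Q P) r θ hΔ hSig hs hD h2r
    · exact GKAux.master M N a Q P (GKAux.Atp M N a Q P) (GKAux.Btp N)
        (fun _ => -(2*a*M)) 1 0 (GKAux.hasDerivAt_Atp M N a Q P)
        (GKAux.entry10 M N a Q P) r θ hΔ hSig hs hD h2r
    · exact GKAux.master M N a Q P (GKAux.App a) GKAux.Bpp
        (fun _ => 0) 1 1 (GKAux.hasDerivAt_App a)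
        (GKAux.entry11 M N a Q P) r θ hΔ hSig hs hD h2r
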